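/- Let n = 2·p_1^{a_1}⋯p_k^{a_k} with each a_j ≥ 1, where p_1 < ⋯ < p_k are the first k primes (k > 1), and let n_k = p_1⋯p_k. Then ρ(2n_k) ≤ ρ(n), where ρ(m) = |X'_m|/φ(m) is the proportion of primitive Dirichlet characters modulo m. -/

import Mathlib

open Filter Finset Real

/-- The number of primitive Dirichlet characters modulo `n`. -/
noncomputable def numPrim (n : ℕ) : ℕ :=
  Nat.card {χ : DirichletCharacter ℂ n // χ.IsPrimitive}

/-- The proportion of Dirichlet characters mod `n` that are primitive. -/
noncomputable def rho (n : ℕ) : ℝ := (numPrim n : ℝ) / (Nat.totient n : ℝ)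

/-- The product of the first `k` primes. -/
noncomputable def nthPrimorial (k : ℕ) : ℕ := ∏ i ∈ Finset.range k, Nat.nth Nat.Prime i

/-- The twin prime constant `C₂ = ∏_{p > 2} p(p-2)/(p-1)²`. -/
noncomputable def twinPrimeConst : ℝ :=
  ∏' p : {p : ℕ // p.Prime ∧ 2 < p},
    (((p : ℕ) : ℝ) * (((p : ℕ) : ℝ) - 2) / (((p : ℕ) : ℝ) - 1) ^ 2)

/-- Chebyshev's theta function `ϑ(x) = ∑_{p ≤ x} log p`. -/
noncomputable def theta (x : ℝ) : ℝ :=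
  ∑ p ∈ Nat.primesBelow (⌊x⌋₊ + 1), Real.log p

/-- The function `f` of Nicolas. -/
noncomputable def ffun (x : ℝ) : ℝ :=
  Real.exp Real.eulerMascheroniConstant * Real.log (theta x) *
    ∏ p ∈ Nat.primesBelow (⌊x⌋₊ + 1), (1 - 1 / (p : ℝ))

/-- The modified function `g`. -/
noncomputable def gfun (x : ℝ) : ℝ :=
  Real.exp Real.eulerMascheroniConstant * Real.log (theta x + Real.log 2) *
    (∏ p ∈ Nat.primesBelow (⌊x⌋₊ + 1), (1 - 1 / (p : ℝ))) *
    ∏' p : {p : ℕ // p.Prime ∧ x < (p : ℝ)},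
      (1 + 1 / (((p : ℕ) : ℝ) * (((p : ℕ) : ℝ) - 2)))

/-!
Every Dirichlet character mod `n` is induced by a unique primitive character whose level is its
conductor `d ∣ n`, so `∑_{d ∣ n} |X'_d| = φ(n)`. Möbius inversion then makes `|X'_n| = (μ * φ)(n)`
multiplicative, and with it `ρ`. For prime powers `|X'_{p^c}| = φ(p^c) - φ(p^(c-1))`, so
`ρ(p) = (p-2)/(p-1) ≤ 1 - 1/p = ρ(p^c)` for `c ≥ 2`: `ρ(p^c)` is nondecreasing in `c ≥ 1`, and the
theorem follows by comparing `2 n_k` and `n` prime by prime.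
-/

open DirichletCharacter ArithmeticFunction
open scoped ArithmeticFunction.Moebius

lemma DirichletCharacter.card_conductor_eq {R : Type*} [CommMonoidWithZero R] {n d : ℕ}
    [NeZero n] (hd : d ∣ n) :
    Nat.card {χ : DirichletCharacter R n // χ.conductor = d} =
      Nat.card {ψ : DirichletCharacter R d // ψ.IsPrimitive} := by
  refine (Nat.card_congr (Equiv.ofBijective
    (fun ψ : {ψ : DirichletCharacter R d // ψ.IsPrimitive} =>
      ⟨changeLevel hd ψ.1, (conductor_changeLevel ψ.1 hd).trans ψ.2⟩) ⟨?_, ?_⟩)).symm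
  · exact fun ψ₁ ψ₂ h => Subtype.ext (changeLevel_injective hd (congrArg Subtype.val h))
  · rintro ⟨χ, hχ⟩
    obtain ⟨-, ψ, rfl⟩ : χ.FactorsThrough d := hχ ▸ χ.factorsThrough_conductor
    exact ⟨⟨ψ, (conductor_changeLevel ψ hd).symm.trans hχ⟩, rfl⟩

lemma sum_divisors_numPrim (n : ℕ) [NeZero n] : ∑ d ∈ n.divisors, numPrim d = n.totient := by
  classical
  have : Fintype (DirichletCharacter ℂ n) := Fintype.ofFinite _
  rw [← card_eq_totient_of_hasEnoughRootsOfUnity ℂ n, Nat.card_eq_fintype_card, ← card_univ,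
    card_eq_sum_card_fiberwise (f := conductor) fun χ _ =>
      Nat.mem_divisors.mpr ⟨χ.conductor_dvd_level, NeZero.ne n⟩]
  refine sum_congr rfl fun d hd => ?_
  rw [numPrim, ← card_conductor_eq (Nat.dvd_of_mem_divisors hd), Nat.card_eq_fintype_card,
    Fintype.card_subtype]

namespace ArithmeticFunction

def totient : ArithmeticFunction ℕ := ⟨Nat.totient, Nat.totient_zero⟩

@[simp]
lemma totient_apply (n : ℕ) : totient n = n.totient := rfl

lemma isMultiplicative_totient : totient.IsMultiplicative :=
  ⟨Nat.totient_one, Nat.totient_mul⟩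

end ArithmeticFunction

lemma numPrim_eq_moebius_mul_totient {n : ℕ} (hn : n ≠ 0) :
    (numPrim n : ℝ) = ((μ : ArithmeticFunction ℝ) * (totient : ArithmeticFunction ℝ)) n := by
  have hinv := (sum_eq_iff_sum_mul_moebius_eq (f := fun m => (numPrim m : ℝ))
    (g := fun m => (m.totient : ℝ))).mp (fun m hm => by
      have : NeZero m := ⟨hm.ne'⟩
      exact_mod_cast sum_divisors_numPrim m) n (Nat.pos_of_ne_zero hn)
  rw [← hinv, mul_apply]
  simp

-- `rho 0 = 0` since `φ 0 = 0`.
noncomputable def rhoArith : ArithmeticFunction ℝ := ⟨rho, by simp [rho]⟩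

lemma isMultiplicative_rhoArith : rhoArith.IsMultiplicative := by
  have h : rhoArith =
      ((μ : ArithmeticFunction ℝ) * (totient : ArithmeticFunction ℝ)).pdiv totient := by
    ext n
    rcases eq_or_ne n 0 with rfl | hn
    · simp
    · simp [rhoArith, rho, numPrim_eq_moebius_mul_totient hn]
  rw [h]
  exact (isMultiplicative_moebius.intCast.mul isMultiplicative_totient.natCast).pdiv
    isMultiplicative_totient.natCast

lemma rho_prod_prime_pow {ι : Type*} {s : Finset ι} {p : ι → ℕ} (hp : ∀ i ∈ s, (p i).Prime)
    (hinj : Set.InjOn p s) (e : ι → ℕ) :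
    rho (∏ i ∈ s, p i ^ e i) = ∏ i ∈ s, rho (p i ^ e i) :=
  isMultiplicative_rhoArith.map_prod _ s fun i hi j hj hij =>
    Nat.Coprime.pow _ _ <| (Nat.coprime_primes (hp i hi) (hp j hj)).mpr (hinj.ne hi hj hij)

lemma numPrim_prime_pow_succ_add {p : ℕ} (hp : p.Prime) (c : ℕ) :
    numPrim (p ^ (c + 1)) + (p ^ c).totient = (p ^ (c + 1)).totient := by
  have : NeZero p := ⟨hp.ne_zero⟩
  rw [← sum_divisors_numPrim, ← sum_divisors_numPrim, Nat.sum_divisors_prime_pow hp,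
    Nat.sum_divisors_prime_pow hp, sum_range_succ _ (c + 1), add_comm]

lemma rho_prime_pow_succ {p : ℕ} (hp : p.Prime) (c : ℕ) :
    rho (p ^ (c + 1)) = 1 - ((p ^ c).totient : ℝ) / (p ^ (c + 1)).totient := by
  have hpos : ((p ^ (c + 1)).totient : ℝ) ≠ 0 := by
    exact_mod_cast (Nat.totient_pos.mpr (pow_pos hp.pos _)).ne'
  rw [rho, eq_sub_iff_add_eq, ← add_div, div_eq_one_iff_eq hpos]
  exact_mod_cast numPrim_prime_pow_succ_add hp c

lemma rho_prime {p : ℕ} (hp : p.Prime) : rho p = 1 - 1 / (p - 1 : ℝ) := by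
  simpa [Nat.totient_prime hp, Nat.cast_sub hp.one_le] using rho_prime_pow_succ hp 0

lemma rho_prime_pow {p c : ℕ} (hp : p.Prime) (hc : 2 ≤ c) : rho (p ^ c) = 1 - 1 / p := by
  obtain ⟨c, rfl⟩ := Nat.exists_eq_add_of_le' hc
  have hp0 : (p : ℝ) ≠ 0 := by exact_mod_cast hp.ne_zero
  have hp1 : (p : ℝ) - 1 ≠ 0 := sub_ne_zero.mpr (by exact_mod_cast hp.one_lt.ne')
  rw [rho_prime_pow_succ hp, Nat.totient_prime_pow_succ hp, Nat.totient_prime_pow_succ hp]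
  push_cast [Nat.cast_sub hp.one_le]
  field_simp
  ring

lemma rho_prime_pow_le_rho_prime_pow {p b c : ℕ} (hp : p.Prime) (hb : 1 ≤ b) (hbc : b ≤ c) :
    rho (p ^ b) ≤ rho (p ^ c) := by
  rcases (show b = 1 ∨ 2 ≤ b by omega) with rfl | hb
  · rcases (show c = 1 ∨ 2 ≤ c by omega) with rfl | hc
    · rfl
    have hp2 : (2 : ℝ) ≤ p := by exact_mod_cast hp.two_le
    rw [pow_one, rho_prime hp, rho_prime_pow hp hc]
    gcongr <;> linarith
  · rw [rho_prime_pow hp hb, rho_prime_pow hp (hb.trans hbc)]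

lemma rho_nonneg (n : ℕ) : 0 ≤ rho n := by
  unfold rho
  positivity

lemma two_mul_prod_nth_prime_pow (j : ℕ) (e : ℕ → ℕ) :
    2 * ∏ i ∈ range (j + 1), Nat.nth Nat.Prime i ^ e i =
      ∏ i ∈ range (j + 1), Nat.nth Nat.Prime i ^ (e i + if 0 = i then 1 else 0) := by
  simp_rw [pow_add, prod_mul_distrib, prod_pow_boole, if_pos (mem_range.mpr j.succ_pos),
    Nat.nth_prime_zero_eq_two, mul_comm]

theorem rho_primorial_le (k : ℕ) (hk : 1 < k) (a : ℕ → ℕ) (ha : ∀ i < k, 1 ≤ a i) :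
    rho (2 * nthPrimorial k) ≤
      rho (2 * ∏ i ∈ Finset.range k, (Nat.nth Nat.Prime i) ^ (a i)) := by
  obtain ⟨j, rfl⟩ : ∃ j, k = j + 1 := ⟨k - 1, by omega⟩
  have hprimorial : nthPrimorial (j + 1) = ∏ i ∈ range (j + 1), Nat.nth Nat.Prime i ^ 1 := by
    simp [nthPrimorial]
  have hprime (i : ℕ) : (Nat.nth Nat.Prime i).Prime := Nat.prime_nth_prime i
  have hinj : Set.InjOn (Nat.nth Nat.Prime) ↑(range (j + 1)) :=
    (Nat.nth_injective Nat.infinite_setOfPred_prime).injOn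
  rw [hprimorial, two_mul_prod_nth_prime_pow, two_mul_prod_nth_prime_pow,
    rho_prod_prime_pow (fun i _ => hprime i) hinj, rho_prod_prime_pow (fun i _ => hprime i) hinj]
  refine prod_le_prod (fun i _ => rho_nonneg _) fun i hi =>
    rho_prime_pow_le_rho_prime_pow (hprime i) ?_ ?_
  · split_ifs <;> omega
  · have := ha i (mem_range.mp hi)
    split_ifs <;> omega
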